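/- Let L_α(t) = max{n ≥ 0 : σ_α(n) ≤ t} be the inverse of a Sibuya(α) random walk. Then for every m ≥ 0, the generating function ∑_{t=0}^∞ u^t P(L_α(t) = m) equals (1-u)^{α-1} [1 - (1-u)^α]^m for u ∈ [0,1). -/

import Mathlib

/-!
Since the Sibuya steps are a.s. positive, `L(t) = m` holds exactly when `S m ≤ t < S m + Z m`.
As `S m` is independent of `Z m`, `P(L(t) = m)` is the convolution of the law of `S m` with the
tail `P(t < Z m)`, so its generating function is the product of theirs. The binomial series
gives `G(u) = 1 - (1 - u)^α` for the generating function of one step; the partial sum `S m`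
then has `G(u)^m`, and the tail has `(1 - G(u)) / (1 - u) = (1 - u)^(α - 1)`.
-/
open MeasureTheory ProbabilityTheory

/-- Generalized binomial coefficient `binom(x, k) = x(x-1)⋯(x-k+1)/k!` for real `x`. -/
noncomputable def gbinom (x : ℝ) (k : ℕ) : ℝ :=
  (∏ i ∈ Finset.range k, (x - i)) / (Nat.factorial k)

/-- Sibuya(α) probability mass function. -/
noncomputable def sibuya (α : ℝ) (k : ℕ) : ℝ :=
  if k = 0 then 0 else (-1 : ℝ) ^ (k - 1) * gbinom α k

open Finset

theorem gbinom_eq_choose (x : ℝ) (k : ℕ) : gbinom x k = Ring.choose x k := by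
  rw [Ring.choose_eq_smul, gbinom, ← Polynomial.aeval_eq_smeval, Polynomial.aeval_def,
    ← Polynomial.eval_map, descPochhammer_map, descPochhammer_eval_eq_prod_range, smul_eq_mul,
    div_eq_inv_mul]

theorem hasSum_gbinom_mul_pow (a : ℝ) {x : ℝ} (hx : |x| < 1) :
    HasSum (fun k ↦ gbinom a k * x ^ k) ((1 + x) ^ a) := by
  have := Real.one_add_rpow_hasFPowerSeriesOnBall_zero (a := a) |>.hasSum (y := x) (by
    simpa [Metric.mem_eball, edist_zero_right, ← ofReal_norm] using hx)
  simpa [binomialSeries, FormalMultilinearSeries.ofScalars_apply_eq, gbinom_eq_choose,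
    mul_comm] using this

theorem hasSum_pow_mul_sibuya (α : ℝ) {u : ℝ} (hu : |u| < 1) :
    HasSum (fun k ↦ u ^ k * sibuya α k) (1 - (1 - u) ^ α) := by
  have hbinom := hasSum_gbinom_mul_pow α (x := -u) (by rwa [abs_neg])
  rw [← sub_eq_add_neg] at hbinom
  refine ((hasSum_ite_eq 0 (1 : ℝ)).sub hbinom).congr_fun fun k ↦ ?_
  rcases k with _ | k
  · simp [sibuya, gbinom]
  · simp only [sibuya, Nat.add_one_ne_zero, if_false, Nat.add_sub_cancel, neg_pow u,
      pow_succ]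
    ring

theorem hasSum_pow_mul_sum_antidiagonal {u : ℝ} (hu : |u| < 1) {a b : ℕ → ℝ}
    (ha : ∀ k, |a k| ≤ 1) (hb : ∀ k, |b k| ≤ 1) {A B : ℝ}
    (hA : HasSum (fun k ↦ u ^ k * a k) A) (hB : HasSum (fun k ↦ u ^ k * b k) B) :
    HasSum (fun n ↦ u ^ n * ∑ p ∈ antidiagonal n, a p.1 * b p.2) (A * B) := by
  have hnorm : ∀ c : ℕ → ℝ, (∀ k, |c k| ≤ 1) → Summable fun k ↦ ‖u ^ k * c k‖ := fun c hc ↦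
    (summable_geometric_of_lt_one (abs_nonneg u) hu).of_nonneg_of_le (fun _ ↦ norm_nonneg _)
      fun k ↦ by
        rw [Real.norm_eq_abs, abs_mul, abs_pow]
        exact mul_le_of_le_one_right (by positivity) (hc k)
  have hprod := (summable_norm_sum_mul_antidiagonal_of_summable_norm
    (hnorm a ha) (hnorm b hb)).of_norm.hasSum
  rw [← tsum_mul_tsum_eq_tsum_sum_antidiagonal_of_summable_norm (hnorm a ha) (hnorm b hb),
    hA.tsum_eq, hB.tsum_eq] at hprod
  refine hprod.congr_fun fun n ↦ ?_
  rw [mul_sum]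
  refine sum_congr rfl fun p hp ↦ ?_
  rw [← mem_antidiagonal.1 hp, pow_add]
  ring

theorem Nat.sSup_setOf_le_eq_iff {f : ℕ → ℕ} (hf : StrictMono f) {t : ℕ} (h0 : f 0 ≤ t)
    (m : ℕ) : sSup {n | f n ≤ t} = m ↔ f m ≤ t ∧ t < f (m + 1) := by
  have hbdd : BddAbove {n | f n ≤ t} := ⟨t, fun n hn ↦ (hf.id_le n).trans hn⟩
  constructor
  · rintro rfl
    refine ⟨Nat.sSup_mem ⟨0, h0⟩ hbdd, lt_of_not_ge fun h ↦ ?_⟩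
    exact (le_csSup hbdd h).not_gt (Nat.lt_succ_self _)
  · rintro ⟨hm, hm'⟩
    refine le_antisymm (csSup_le ⟨m, hm⟩ fun n hn ↦ ?_) (le_csSup hbdd hm)
    by_contra! h
    exact (hf.monotone h).trans hn |>.not_gt hm'

namespace ProbabilityTheory

variable {Ω : Type*} [MeasurableSpace Ω] {μ : Measure Ω}

theorem abs_measureReal_le_one [IsProbabilityMeasure μ] (s : Set Ω) : |μ.real s| ≤ 1 := by
  rw [abs_of_nonneg measureReal_nonneg]
  exact measureReal_le_one

theorem IndepFun.measureReal_exists_antidiagonal [IsFiniteMeasure μ] {X Y : Ω → ℕ}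
    (hXY : IndepFun X Y μ) (hX : Measurable X) (hY : Measurable Y) (n : ℕ) (B : ℕ → Set ℕ) :
    μ.real {ω | ∃ p ∈ antidiagonal n, X ω = p.1 ∧ Y ω ∈ B p.2}
      = ∑ p ∈ antidiagonal n, μ.real {ω | X ω = p.1} * μ.real {ω | Y ω ∈ B p.2} := by
  have hunion : {ω | ∃ p ∈ antidiagonal n, X ω = p.1 ∧ Y ω ∈ B p.2}
      = ⋃ p ∈ antidiagonal n, X ⁻¹' {p.1} ∩ Y ⁻¹' B p.2 := by
    ext ω
    simp
  have hdisj : (antidiagonal n : Set (ℕ × ℕ)).PairwiseDisjoint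
      fun p ↦ X ⁻¹' {p.1} ∩ Y ⁻¹' B p.2 := by
    intro p hp q hq hpq
    refine Set.disjoint_left.2 fun ω hωp hωq ↦ hpq ?_
    have h1 : p.1 = q.1 := hωp.1.symm.trans hωq.1
    exact Prod.ext h1 (by have := mem_antidiagonal.1 hp; have := mem_antidiagonal.1 hq; omega)
  rw [hunion, measureReal_biUnion_finset hdisj
    fun p _ ↦ (hX (measurableSet_singleton _)).inter (hY MeasurableSet.of_discrete)]
  refine sum_congr rfl fun p _ ↦ ?_
  simp only [measureReal_def, ENNReal.toReal_mul,
    hXY.measure_inter_preimage_eq_mul _ _ (measurableSet_singleton _) MeasurableSet.of_discrete]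
  rfl

theorem iIndepFun.indepFun_fun_sum_range {Z : ℕ → Ω → ℕ} (hZ : ∀ i, Measurable (Z i))
    (hind : iIndepFun Z μ) (n : ℕ) : IndepFun (fun ω ↦ ∑ j ∈ range n, Z j ω) (Z n) μ := by
  simpa only [← Finset.sum_apply] using hind.indepFun_sum_range_succ hZ n

variable [IsProbabilityMeasure μ]

theorem iIndepFun.hasSum_pow_mul_measureReal_sum_range_eq {Z : ℕ → Ω → ℕ}
    (hZ : ∀ i, Measurable (Z i)) (hind : iIndepFun Z μ) {u G : ℝ} (hu : |u| < 1)
    (hG : ∀ i, HasSum (fun k ↦ u ^ k * μ.real {ω | Z i ω = k}) G) (n : ℕ) :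
    HasSum (fun k ↦ u ^ k * μ.real {ω | ∑ j ∈ range n, Z j ω = k}) (G ^ n) := by
  induction n with
  | zero =>
    refine (hasSum_ite_eq 0 (1 : ℝ)).congr_fun fun k ↦ ?_
    rcases k with _ | k <;> simp [eq_comm]
  | succ n ih =>
    rw [pow_succ]
    refine (hasSum_pow_mul_sum_antidiagonal hu (fun _ ↦ abs_measureReal_le_one _)
      (fun _ ↦ abs_measureReal_le_one _) ih (hG n)).congr_fun fun k ↦ ?_
    have hconv := (hind.indepFun_fun_sum_range hZ n).measureReal_exists_antidiagonal
      (by fun_prop) (hZ n) k fun j ↦ {j}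
    simp only [Set.mem_singleton_iff] at hconv
    rw [← hconv]
    congr 2
    ext ω
    simp [sum_range_succ]

theorem hasSum_pow_mul_measureReal_lt {X : Ω → ℕ} (hX : Measurable X) {u G : ℝ}
    (hu : |u| < 1) (hG : HasSum (fun k ↦ u ^ k * μ.real {ω | X ω = k}) G) :
    HasSum (fun t ↦ u ^ t * μ.real {ω | t < X ω}) ((1 - G) / (1 - u)) := by
  have hgeom : HasSum (fun k ↦ u ^ k * 1) (1 - u)⁻¹ := by
    simpa using hasSum_geometric_of_abs_lt_one hu
  have hcdf := hasSum_pow_mul_sum_antidiagonal hu (fun _ ↦ abs_measureReal_le_one _)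
    (fun _ ↦ by simp) hG hgeom
  rw [div_eq_mul_inv, sub_mul, one_mul]
  refine (hgeom.sub hcdf).congr_fun fun t ↦ ?_
  have hle : {ω | X ω ≤ t} = X ⁻¹' ↑(range (t + 1)) := by
    ext ω
    simp
  have hlt : {ω | t < X ω} = {ω | X ω ≤ t}ᶜ := by
    ext ω
    simp
  rw [hlt, probReal_compl_eq_one_sub (measurableSet_le hX measurable_const), hle,
    ← sum_measureReal_preimage_singleton _ fun _ _ ↦ hX (measurableSet_singleton _),
    Nat.sum_antidiagonal_eq_sum_range_succ_mk]
  simp only [mul_one, mul_sub]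
  rfl

theorem measureReal_sSup_sum_range_le_eq {Z : ℕ → Ω → ℕ} (hZ : ∀ i, Measurable (Z i))
    (hind : iIndepFun Z μ) (hpos : ∀ i, μ {ω | Z i ω = 0} = 0) (t m : ℕ) :
    μ.real {ω | sSup {n | ∑ j ∈ range n, Z j ω ≤ t} = m}
      = ∑ p ∈ antidiagonal t,
          μ.real {ω | ∑ j ∈ range m, Z j ω = p.1} * μ.real {ω | p.2 < Z m ω} := by
  have hae : ∀ᵐ ω ∂μ, ∀ i, Z i ω ≠ 0 :=
    ae_all_iff.2 fun i ↦ measure_eq_zero_iff_ae_notMem.1 (hpos i)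
  have hsplit := (hind.indepFun_fun_sum_range hZ m).measureReal_exists_antidiagonal
    (by fun_prop) (hZ m) t fun j ↦ Set.Ioi j
  simp only [Set.mem_Ioi] at hsplit
  rw [← hsplit]
  refine measureReal_congr (hae.mono fun ω hω ↦ ?_)
  have hmono : StrictMono fun n ↦ ∑ j ∈ range n, Z j ω :=
    strictMono_nat_of_lt_succ fun n ↦ by
      rw [sum_range_succ]
      exact Nat.lt_add_of_pos_right (Nat.pos_of_ne_zero (hω n))
  change (_ = m) = ∃ p ∈ antidiagonal t, _
  rw [Nat.sSup_setOf_le_eq_iff hmono (by simp), sum_range_succ]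
  simp only [HasAntidiagonal.mem_antidiagonal, eq_iff_iff]
  generalize ∑ j ∈ range m, Z j ω = s
  constructor
  · rintro ⟨hle, hlt⟩
    exact ⟨(_, t - _), Nat.add_sub_of_le hle, rfl, by omega⟩
  · rintro ⟨p, hp, rfl, hp2⟩
    omega

end ProbabilityTheory

theorem sibuya_inverse_generating_function_general
    {Ω : Type*} [MeasurableSpace Ω] (μ : Measure Ω) [IsProbabilityMeasure μ]
    (α : ℝ)
    (Z : ℕ → Ω → ℕ) (hmeas : ∀ i, Measurable (Z i))
    (hindep : iIndepFun Z μ)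
    (hlaw : ∀ i k, (μ {ω | Z i ω = k}).toReal = sibuya α k)
    (S : ℕ → Ω → ℕ) (hS : ∀ n ω, S n ω = ∑ j ∈ Finset.range n, Z j ω)
    (L : ℕ → Ω → ℕ) (hL : ∀ t ω, L t ω = sSup {n : ℕ | S n ω ≤ t})
    (m : ℕ) (u : ℝ) (hu : u ∈ Set.Ico (0 : ℝ) 1) :
    ∑' t : ℕ, u ^ t * (μ {ω | L t ω = m}).toReal
      = (1 - u) ^ (α - 1) * (1 - (1 - u) ^ α) ^ m := by
  obtain rfl : S = fun n ω ↦ ∑ j ∈ range n, Z j ω := funext₂ hS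
  obtain rfl : L = fun t ω ↦ sSup {n | ∑ j ∈ range n, Z j ω ≤ t} := funext₂ hL
  have hu' : |u| < 1 := abs_lt.2 ⟨by linarith [hu.1], hu.2⟩
  have hG : ∀ i, HasSum (fun k ↦ u ^ k * μ.real {ω | Z i ω = k}) (1 - (1 - u) ^ α) :=
    fun i ↦ by simpa only [measureReal_def, hlaw] using hasSum_pow_mul_sibuya α hu'
  have hpos : ∀ i, μ {ω | Z i ω = 0} = 0 := fun i ↦
    (measureReal_eq_zero_iff).1 (by simp [measureReal_def, hlaw, sibuya])
  have hrenewal := hasSum_pow_mul_sum_antidiagonal hu' (fun _ ↦ abs_measureReal_le_one _)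
    (fun _ ↦ abs_measureReal_le_one _)
    (hindep.hasSum_pow_mul_measureReal_sum_range_eq hmeas hu' hG m)
    (hasSum_pow_mul_measureReal_lt (hmeas m) hu' (hG m))
  simp only [← measureReal_sSup_sum_range_le_eq hmeas hindep hpos] at hrenewal
  refine hrenewal.tsum_eq.trans ?_
  rw [sub_sub_cancel, ← Real.rpow_sub_one (by linarith [hu.2]), mul_comm]

/-- For the inverse `L_α(t) = max {n : σ_α(n) ≤ t}` of a Sibuya(α) random walk,
the generating function `∑_{t} u^t P(L_α(t) = m)` equals
`(1-u)^(α-1) [1 - (1-u)^α]^m` for `u ∈ [0,1)` and every `m ∈ ℕ`. -/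
theorem sibuya_inverse_generating_function
    {Ω : Type*} [MeasurableSpace Ω] (μ : Measure Ω) [IsProbabilityMeasure μ]
    (α : ℝ) (hα : α ∈ Set.Ioo (0 : ℝ) 1)
    (Z : ℕ → Ω → ℕ) (hmeas : ∀ i, Measurable (Z i))
    (hindep : iIndepFun Z μ)
    (hlaw : ∀ i k, (μ {ω | Z i ω = k}).toReal = sibuya α k)
    (S : ℕ → Ω → ℕ) (hS : ∀ n ω, S n ω = ∑ j ∈ Finset.range n, Z j ω)
    (L : ℕ → Ω → ℕ) (hL : ∀ t ω, L t ω = sSup {n : ℕ | S n ω ≤ t})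
    (m : ℕ) (u : ℝ) (hu : u ∈ Set.Ico (0 : ℝ) 1) :
    ∑' t : ℕ, u ^ t * (μ {ω | L t ω = m}).toReal
      = (1 - u) ^ (α - 1) * (1 - (1 - u) ^ α) ^ m :=
  sibuya_inverse_generating_function_general μ α Z hmeas hindep hlaw S hS L hL m u hu
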